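/- Let p : ℤ/n → ℝ² be a regular polygon critical for L + κ·Vol (so l_k ≡ l₀, θ_k ≡ θ₀, κ l₀ = 2 tan(θ₀/2)), and v_k = ψ_k N_k + η_k T_k with N_k = (ν_k+ν_{k-1})/(1+cos θ₀), T_k = −R N_k. Then |v_{k+1} − v_k|² − ⟨v_{k+1} − v_k, R ν_k⟩² = ((ψ_{k+1} − ψ_k) + tan(θ₀/2)(η_{k+1} + η_k))². -/

import Mathlib

open Real Finset
open scoped RealInnerProductSpace

abbrev E2 := EuclideanSpace ℝ (Fin 2)

/-- Rotation by π/2 in the plane. -/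
noncomputable def Rot (v : E2) : E2 :=
  (WithLp.equiv 2 (Fin 2 → ℝ)).symm ![-v 1, v 0]

/-- Rotation by angle θ in the plane. -/
noncomputable def RotBy (θ : ℝ) (v : E2) : E2 :=
  (WithLp.equiv 2 (Fin 2 → ℝ)).symm
    ![Real.cos θ * v 0 - Real.sin θ * v 1, Real.sin θ * v 0 + Real.cos θ * v 1]


/-!
Write `e = ν k`. As `e` is a unit vector, `‖w‖² - ⟪w, R e⟫² = ⟪w, e⟫²`, so only the
component of `v (k+1) - v k` along `e` matters. The neighbouring normals are `e` rotated by
`∓θ₀`, so both bisectors `N k`, `N (k+1)` have component `1` along `e` and components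
`∓ tan (θ₀/2)` along `R e`; since `T = -R N`, these are the components of `T k`, `T (k+1)`
along `e`.
-/

theorem Real.tan_half_eq_sin_div_one_add_cos (θ : ℝ) :
    tan (θ / 2) = sin θ / (1 + cos θ) := by
  have hcos : 1 + cos θ = 2 * cos (θ / 2) ^ 2 := by
    rw [cos_sq, mul_div_cancel₀ _ two_ne_zero]; ring
  have hsin : sin θ = 2 * sin (θ / 2) * cos (θ / 2) := by
    rw [← sin_two_mul, mul_div_cancel₀ _ two_ne_zero]
  rw [tan_eq_sin_div_cos, hcos, hsin]
  rcases eq_or_ne (cos (θ / 2)) 0 with h | h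
  · simp [h]
  · field_simp

theorem Real.one_add_cos_ne_zero {θ : ℝ} (hθ : θ ∈ Set.Ioo (-π) π) : 1 + cos θ ≠ 0 := by
  have hlt : cos π < cos θ := by
    rw [← cos_abs θ]
    exact cos_lt_cos_of_nonneg_of_le_pi (abs_nonneg θ) le_rfl (abs_lt.mpr hθ)
  rw [cos_pi] at hlt
  linarith

namespace E2

lemma inner_eq (w u : E2) : ⟪w, u⟫ = w 0 * u 0 + w 1 * u 1 := by
  simp [PiLp.inner_apply, Fin.sum_univ_two, mul_comm]

lemma norm_sq_eq (w : E2) : ‖w‖ ^ 2 = w 0 ^ 2 + w 1 ^ 2 := by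
  rw [← real_inner_self_eq_norm_sq, inner_eq]; ring

end E2

@[simp] lemma Rot_apply_zero (v : E2) : Rot v 0 = -v 1 := rfl
@[simp] lemma Rot_apply_one (v : E2) : Rot v 1 = v 0 := rfl
@[simp] lemma RotBy_apply_zero (θ : ℝ) (v : E2) :
    RotBy θ v 0 = cos θ * v 0 - sin θ * v 1 := rfl
@[simp] lemma RotBy_apply_one (θ : ℝ) (v : E2) :
    RotBy θ v 1 = sin θ * v 0 + cos θ * v 1 := rfl

lemma norm_Rot (v : E2) : ‖Rot v‖ = ‖v‖ := by
  rw [← sq_eq_sq₀ (norm_nonneg _) (norm_nonneg _), E2.norm_sq_eq, E2.norm_sq_eq]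
  simp only [Rot_apply_zero, Rot_apply_one]; ring

lemma norm_RotBy (θ : ℝ) (v : E2) : ‖RotBy θ v‖ = ‖v‖ := by
  rw [← sq_eq_sq₀ (norm_nonneg _) (norm_nonneg _), E2.norm_sq_eq, E2.norm_sq_eq]
  simp only [RotBy_apply_zero, RotBy_apply_one]
  linear_combination (v 0 ^ 2 + v 1 ^ 2) * cos_sq_add_sin_sq θ

lemma inner_neg_Rot_left (v w : E2) : ⟪-Rot v, w⟫ = ⟪v, Rot w⟫ := by
  rw [inner_neg_left, E2.inner_eq, E2.inner_eq]
  simp only [Rot_apply_zero, Rot_apply_one]; ring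

lemma inner_Rot_self (v : E2) : ⟪v, Rot v⟫ = 0 := by
  rw [E2.inner_eq]; simp only [Rot_apply_zero, Rot_apply_one]; ring

lemma inner_RotBy_self (θ : ℝ) (v : E2) : ⟪RotBy θ v, v⟫ = cos θ * ‖v‖ ^ 2 := by
  rw [E2.inner_eq, E2.norm_sq_eq]; simp only [RotBy_apply_zero, RotBy_apply_one]; ring

lemma inner_self_RotBy (θ : ℝ) (v : E2) : ⟪v, RotBy θ v⟫ = cos θ * ‖v‖ ^ 2 := by
  rw [real_inner_comm, inner_RotBy_self]

lemma inner_RotBy_Rot_self (θ : ℝ) (v : E2) :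
    ⟪RotBy θ v, Rot v⟫ = sin θ * ‖v‖ ^ 2 := by
  rw [E2.inner_eq, E2.norm_sq_eq]
  simp only [RotBy_apply_zero, RotBy_apply_one, Rot_apply_zero, Rot_apply_one]; ring

lemma inner_self_Rot_RotBy (θ : ℝ) (v : E2) :
    ⟪v, Rot (RotBy θ v)⟫ = -(sin θ * ‖v‖ ^ 2) := by
  rw [E2.inner_eq, E2.norm_sq_eq]
  simp only [RotBy_apply_zero, RotBy_apply_one, Rot_apply_zero, Rot_apply_one]; ring

lemma norm_sq_eq_inner_sq_add_inner_Rot_sq {e : E2} (he : ‖e‖ = 1) (w : E2) :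
    ‖w‖ ^ 2 = ⟪w, e⟫ ^ 2 + ⟪w, Rot e⟫ ^ 2 := by
  have he' : e 0 ^ 2 + e 1 ^ 2 = 1 := by rw [← E2.norm_sq_eq, he, one_pow]
  rw [E2.norm_sq_eq, E2.inner_eq, E2.inner_eq]
  simp only [Rot_apply_zero, Rot_apply_one]
  linear_combination (-(w 0 ^ 2 + w 1 ^ 2)) * he'

lemma inner_smul_add_smul_neg_Rot (ψ η : ℝ) (N e : E2) :
    ⟪ψ • N + η • -Rot N, e⟫ = ψ * ⟪N, e⟫ + η * ⟪N, Rot e⟫ := by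
  rw [inner_add_left, real_inner_smul_left, real_inner_smul_left, inner_neg_Rot_left]

/-- The vector `N` of the statement at the vertex where the edge normal turns from `a` to
`RotBy θ a`. -/
noncomputable def edgeBisector (θ : ℝ) (a : E2) : E2 :=
  (1 + cos θ)⁻¹ • (RotBy θ a + a)

section edgeBisector

variable {θ : ℝ} {a : E2}

lemma inner_edgeBisector_self (ha : ‖a‖ = 1) (hθ : 1 + cos θ ≠ 0) :
    ⟪edgeBisector θ a, a⟫ = 1 := by
  rw [edgeBisector, real_inner_smul_left, inner_add_left, inner_RotBy_self,
    real_inner_self_eq_norm_sq, ha]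
  field_simp
  ring

lemma inner_edgeBisector_RotBy (ha : ‖a‖ = 1) (hθ : 1 + cos θ ≠ 0) :
    ⟪edgeBisector θ a, RotBy θ a⟫ = 1 := by
  rw [edgeBisector, real_inner_smul_left, inner_add_left, inner_self_RotBy,
    real_inner_self_eq_norm_sq, norm_RotBy, ha]
  field_simp

lemma inner_edgeBisector_Rot_self (ha : ‖a‖ = 1) :
    ⟪edgeBisector θ a, Rot a⟫ = tan (θ / 2) := by
  rw [edgeBisector, real_inner_smul_left, inner_add_left, inner_RotBy_Rot_self,
    inner_Rot_self, ha, tan_half_eq_sin_div_one_add_cos]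
  ring

lemma inner_edgeBisector_Rot_RotBy (ha : ‖a‖ = 1) :
    ⟪edgeBisector θ a, Rot (RotBy θ a)⟫ = -tan (θ / 2) := by
  rw [edgeBisector, real_inner_smul_left, inner_add_left, inner_Rot_self,
    inner_self_Rot_RotBy, ha, tan_half_eq_sin_div_one_add_cos]
  ring

end edgeBisector

theorem secondVariation_normal_part_general (n : ℕ)
    (p : ZMod n → E2) (hreg : ∀ k, p (k + 1) ≠ p k)
    (ν : ZMod n → E2)
    (hν : ∀ k, ν k = Rot (‖p (k + 1) - p k‖⁻¹ • (p (k + 1) - p k)))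
    (θ₀ : ℝ) (hθ₀range : θ₀ ∈ Set.Ioo (-π) π)
    (hθ : ∀ k, RotBy θ₀ (ν (k - 1)) = ν k)
    (N T : ZMod n → E2)
    (hN : ∀ k, N k = (1 + Real.cos θ₀)⁻¹ • (ν k + ν (k - 1)))
    (hT : ∀ k, T k = -Rot (N k))
    (ψ η : ZMod n → ℝ) (v : ZMod n → E2)
    (hv : ∀ k, v k = ψ k • N k + η k • T k) :
    ∀ k : ZMod n,
      ‖v (k + 1) - v k‖ ^ 2 - ⟪v (k + 1) - v k, Rot (ν k)⟫ ^ 2 =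
        ((ψ (k + 1) - ψ k) + Real.tan (θ₀ / 2) * (η (k + 1) + η k)) ^ 2 := by
  intro k
  have hc := one_add_cos_ne_zero hθ₀range
  have hunit : ‖ν k‖ = 1 := by
    rw [hν, norm_Rot]
    exact norm_smul_inv_norm (𝕜 := ℝ) (sub_ne_zero.mpr (hreg k))
  have hprev : ν k = RotBy θ₀ (ν (k - 1)) := (hθ k).symm
  have hunit_prev : ‖ν (k - 1)‖ = 1 := by rwa [hprev, norm_RotBy] at hunit
  have hNk : N k = edgeBisector θ₀ (ν (k - 1)) := by rw [hN, ← hθ k]; rfl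
  have hNk_succ : N (k + 1) = edgeBisector θ₀ (ν k) := by
    rw [hN, ← hθ (k + 1), add_sub_cancel_right]; rfl
  have hNk_e : ⟪N k, ν k⟫ = 1 := by
    rw [hNk, hprev]; exact inner_edgeBisector_RotBy hunit_prev hc
  have hNk_Re : ⟪N k, Rot (ν k)⟫ = -tan (θ₀ / 2) := by
    rw [hNk, hprev]; exact inner_edgeBisector_Rot_RotBy hunit_prev
  have hNk_succ_e : ⟪N (k + 1), ν k⟫ = 1 := by
    rw [hNk_succ]; exact inner_edgeBisector_self hunit hc
  have hNk_succ_Re : ⟪N (k + 1), Rot (ν k)⟫ = tan (θ₀ / 2) := by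
    rw [hNk_succ]; exact inner_edgeBisector_Rot_self hunit
  have hnormal :
      ⟪v (k + 1) - v k, ν k⟫ = (ψ (k + 1) - ψ k) + tan (θ₀ / 2) * (η (k + 1) + η k) := by
    rw [inner_sub_left, hv, hv, hT, hT, inner_smul_add_smul_neg_Rot, inner_smul_add_smul_neg_Rot,
      hNk_e, hNk_Re, hNk_succ_e, hNk_succ_Re]
    ring
  rw [norm_sq_eq_inner_sq_add_inner_Rot_sq hunit, hnormal]
  ring

theorem secondVariation_normal_part (n : ℕ) [NeZero n]
    (p : ZMod n → E2) (hreg : ∀ k, p (k + 1) ≠ p k)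
    (ν : ZMod n → E2)
    (hν : ∀ k, ν k = Rot (‖p (k + 1) - p k‖⁻¹ • (p (k + 1) - p k)))
    (θ₀ : ℝ) (hθ₀range : θ₀ ∈ Set.Ioo (-π) π) (hθ₀ : θ₀ ≠ 0)
    (hθ : ∀ k, RotBy θ₀ (ν (k - 1)) = ν k)
    (N T : ZMod n → E2)
    (hN : ∀ k, N k = (1 + Real.cos θ₀)⁻¹ • (ν k + ν (k - 1)))
    (hT : ∀ k, T k = -Rot (N k))
    (ψ η : ZMod n → ℝ) (v : ZMod n → E2)
    (hv : ∀ k, v k = ψ k • N k + η k • T k) :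
    ∀ k : ZMod n,
      ‖v (k + 1) - v k‖ ^ 2 - ⟪v (k + 1) - v k, Rot (ν k)⟫ ^ 2 =
        ((ψ (k + 1) - ψ k) + Real.tan (θ₀ / 2) * (η (k + 1) + η k)) ^ 2 :=
  secondVariation_normal_part_general n p hreg ν hν θ₀ hθ₀range hθ N T hN hT ψ η v hv
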